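/- arXiv:math/0307148 — 3 statements merged into one kernel-verified Lean document; each statement's English description precedes it below -/
import Mathlib

section
/- Let p ∈ (0,1]. For every function f : 𝒳 → ℝ with π(f) = 0 and every t > 0, π[(P_t f)²] ≤ ((4−2p)/p)^{−p/(2−p)} · (K(p)·t)^{−p/(2−p)} · ‖f‖_∞². -/
open scoped BigOperators

noncomputable section

/-- The generator matrix of the Markov process: `L f (x) = ∑ y, k x y * π y * (f y - f x)`. -/
def genMat {X : Type} [Fintype X] [DecidableEq X] (π : X → ℝ) (k : X → X → ℝ) :
    Matrix X X ℝ :=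
  fun x y => k x y * π y - if x = y then ∑ z, k x z * π z else 0

/-- The Markov semigroup `P_t = e^{tL}` applied to a function `f`. -/
def smg {X : Type} [Fintype X] [DecidableEq X] (π : X → ℝ) (k : X → X → ℝ)
    (t : ℝ) (f : X → ℝ) : X → ℝ :=
  (NormedSpace.exp (t • genMat π k)).mulVec f

/-- The Dirichlet form `E(f,g)`. -/
def dirichletForm {X : Type} [Fintype X] (π : X → ℝ) (k : X → X → ℝ)
    (f g : X → ℝ) : ℝ :=
  (1 / 2) * ∑ x, ∑ y, (f x - f y) * (g x - g y) * k x y * π x * π y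

/-- The sup norm `‖f‖_∞`. -/
def supNorm {X : Type} [Fintype X] (f : X → ℝ) : ℝ := ⨆ x, |f x|

/-- The constant `K(p)`: the infimum over nonzero `f` with `π(f) = 0` of
`E(f,f) ‖f‖_∞^{(4-2p)/p} / π(f²)^{2/p}`. -/
def Kconst {X : Type} [Fintype X] (π : X → ℝ) (k : X → X → ℝ) (p : ℝ) : ℝ :=
  sInf { r : ℝ | ∃ f : X → ℝ, f ≠ 0 ∧ (∑ x, π x * f x) = 0 ∧
    r = dirichletForm π k f f * supNorm f ^ ((4 - 2 * p) / p) /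
      (∑ x, π x * (f x) ^ 2) ^ (2 / p) }

/-!
Write `u(t) = π((P_t f)²)`. Summation by parts gives `u' = -2 E(P_t f, P_t f)`. The semigroup
preserves the mean and, being a stochastic matrix (nonnegative entries, rows summing to one),
does not increase `‖·‖_∞`; so the definition of `K(p)` gives
`E(P_t f, P_t f) ≥ K(p) u^{2/p} / ‖f‖_∞^{(4-2p)/p}`. Hence `u^{-(2-p)/p}` grows at least
linearly, at rate `(4-2p) K(p) / (p ‖f‖_∞^{(4-2p)/p})`, which integrates to the bound.
That `K(p) > 0` follows by compactness: the ratio defining it is scale invariant, and on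
mean-zero functions of sup norm one it is continuous and, by connectedness, positive.
-/

open NormedSpace Matrix Finset

section MatrixExp

open scoped Matrix.Norms.Operator

variable {X : Type*} [Fintype X] [DecidableEq X]

theorem Matrix.map_exp_eq_tsum {F : Type*} [NormedAddCommGroup F] [NormedSpace ℝ F]
    (Φ : Matrix X X ℝ →ₗ[ℝ] F) (M : Matrix X X ℝ) :
    Φ (exp M) = ∑' n : ℕ, (n.factorial⁻¹ : ℝ) • Φ (M ^ n) := by
  rw [congrFun (exp_eq_tsum ℝ) M]
  simpa using Φ.toContinuousLinearMap.map_tsum (expSeries_summable' (𝕂 := ℝ) M)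

theorem Matrix.exp_apply_nonneg {M : Matrix X X ℝ} (hM : ∀ i j, 0 ≤ M i j) (i j : X) :
    0 ≤ exp M i j := by
  have h := map_exp_eq_tsum (entryLinearMap ℝ ℝ i j) M
  simp only [entryLinearMap_apply, smul_eq_mul] at h
  rw [h]
  exact tsum_nonneg fun n => mul_nonneg (by positivity) (pow_apply_nonneg hM n i j)

/-- Adding `c • 1` makes the matrix nonnegative and only multiplies its exponential by `e^c`. -/
theorem Matrix.exp_apply_nonneg_of_offDiag {M : Matrix X X ℝ}
    (hM : ∀ i j, i ≠ j → 0 ≤ M i j) (i j : X) : 0 ≤ exp M i j := by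
  set c : ℝ := ∑ l, |M l l|
  have hshift : ∀ a b, 0 ≤ (M + c • 1) a b := by
    intro a b
    rcases eq_or_ne a b with rfl | hab
    · have hc : |M a a| ≤ c :=
        single_le_sum (f := fun l => |M l l|) (fun l _ => abs_nonneg _) (mem_univ a)
      simp only [add_apply, smul_apply, one_apply_eq, smul_eq_mul, mul_one]
      linarith [neg_abs_le (M a a)]
    · simpa [hab] using hM a b hab
  have h := exp_apply_nonneg hshift i j
  rw [exp_add_of_commute _ _ ((Commute.one_right M).smul_right c), smul_one_eq_diagonal,
    exp_diagonal, mul_diagonal] at h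
  exact nonneg_of_mul_nonneg_left h (by simpa [← Real.exp_eq_exp_ℝ] using Real.exp_pos c)

def Matrix.mulVecLinearMap (v : X → ℝ) : Matrix X X ℝ →ₗ[ℝ] X → ℝ :=
  LinearMap.applyₗ v ∘ₗ Matrix.toLin'.toLinearMap

@[simp]
theorem Matrix.mulVecLinearMap_apply (v : X → ℝ) (A : Matrix X X ℝ) :
    mulVecLinearMap v A = A *ᵥ v := by
  simp [mulVecLinearMap]

theorem Matrix.exp_mulVec_of_mulVec_eq_zero {A : Matrix X X ℝ} {v : X → ℝ}
    (h : A *ᵥ v = 0) : exp A *ᵥ v = v := by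
  have hpow : ∀ n ≠ 0, A ^ n *ᵥ v = 0 := by
    intro n hn
    obtain ⟨m, rfl⟩ := Nat.exists_eq_succ_of_ne_zero hn
    rw [pow_succ, ← mulVec_mulVec, h, mulVec_zero]
  have h := map_exp_eq_tsum (mulVecLinearMap v) A
  simp only [mulVecLinearMap_apply] at h
  rw [h, tsum_eq_single 0 fun n hn => by rw [hpow n hn, smul_zero]]
  simp

theorem Matrix.hasDerivAt_exp_smul_mulVec (A : Matrix X X ℝ) (v : X → ℝ) (t : ℝ) :
    HasDerivAt (fun s : ℝ => exp (s • A) *ᵥ v) (A *ᵥ (exp (t • A) *ᵥ v)) t := by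
  set L := (mulVecLinearMap v).toContinuousLinearMap
  have h : HasDerivAt (fun s => L (exp (s • A))) (L (A * exp (t • A))) t :=
    L.hasFDerivAt.comp_hasDerivAt t (hasDerivAt_exp_smul_const' (𝕂 := ℝ) A t)
  simpa [L, mulVec_mulVec] using h

end MatrixExp

theorem Matrix.norm_mulVec_le_of_stochastic {X : Type*} [Fintype X] {P : Matrix X X ℝ}
    (hP : ∀ i j, 0 ≤ P i j) (hrow : P *ᵥ 1 = 1) (f : X → ℝ) : ‖P *ᵥ f‖ ≤ ‖f‖ := by
  refine (pi_norm_le_iff_of_nonneg (norm_nonneg f)).2 fun x => ?_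
  calc ‖(P *ᵥ f) x‖ = |∑ y, P x y * f y| := rfl
    _ ≤ ∑ y, P x y * ‖f‖ := by
      refine (abs_sum_le_sum_abs _ _).trans (sum_le_sum fun y _ => ?_)
      rw [abs_mul, abs_of_nonneg (hP x y)]
      exact mul_le_mul_of_nonneg_left (norm_le_pi_norm f y) (hP x y)
    _ = ‖f‖ := by
      have hx := congrFun hrow x
      simp only [mulVec, dotProduct, Pi.one_apply, mul_one] at hx
      rw [← sum_mul, hx, one_mul]

theorem SimpleGraph.Reachable.eq_of_forall_adj {V β : Type*} {G : SimpleGraph V} {g : V → β}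
    (hg : ∀ a b, G.Adj a b → g a = g b) {x y : V} (h : G.Reachable x y) : g x = g y := by
  rw [reachable_eq_reflTransGen] at h
  simpa [Relation.reflTransGen_eq_self] using Relation.ReflTransGen.lift g hg x y h

section DirichletForm

variable {X : Type} {π : X → ℝ} {k : X → X → ℝ}

theorem dirichletForm_self_term_nonneg (hπ : ∀ x, 0 < π x) (hk : ∀ x y, 0 ≤ k x y)
    (g : X → ℝ) (x y : X) : 0 ≤ (g x - g y) * (g x - g y) * k x y * π x * π y :=
  mul_nonneg (mul_nonneg (mul_nonneg (mul_self_nonneg _) (hk x y)) (hπ x).le) (hπ y).le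

variable [Fintype X]

theorem sum_mul_sq_pos (hπ : ∀ x, 0 < π x) {g : X → ℝ} (hg : g ≠ 0) :
    0 < ∑ x, π x * g x ^ 2 := by
  obtain ⟨x, hx⟩ := Function.ne_iff.1 hg
  exact sum_pos' (fun y _ => mul_nonneg (hπ y).le (sq_nonneg _))
    ⟨x, mem_univ x, mul_pos (hπ x) (sq_pos_of_ne_zero hx)⟩

theorem dirichletForm_smul_self (c : ℝ) (g : X → ℝ) :
    dirichletForm π k (c • g) (c • g) = c ^ 2 * dirichletForm π k g g := by
  simp only [dirichletForm, Pi.smul_apply, smul_eq_mul, mul_sum]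
  exact sum_congr rfl fun x _ => sum_congr rfl fun y _ => by ring

theorem dirichletForm_self_nonneg (hπ : ∀ x, 0 < π x) (hk : ∀ x y, 0 ≤ k x y) (g : X → ℝ) :
    0 ≤ dirichletForm π k g g :=
  mul_nonneg (by norm_num) (sum_nonneg fun x _ => sum_nonneg fun y _ =>
    dirichletForm_self_term_nonneg hπ hk g x y)

theorem eq_of_dirichletForm_self_eq_zero (hπ : ∀ x, 0 < π x) (hk : ∀ x y, 0 ≤ k x y)
    {g : X → ℝ} (h : dirichletForm π k g g = 0) {x y : X} (hxy : k x y ≠ 0) : g x = g y := by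
  have hsum : ∑ x, ∑ y, (g x - g y) * (g x - g y) * k x y * π x * π y = 0 := by
    simpa [dirichletForm] using h
  have hterm := (sum_eq_zero_iff_of_nonneg fun y _ => dirichletForm_self_term_nonneg hπ hk g x y).1
    ((sum_eq_zero_iff_of_nonneg fun x _ => sum_nonneg fun y _ =>
      dirichletForm_self_term_nonneg hπ hk g x y).1 hsum x (mem_univ x)) y (mem_univ y)
  simpa [hxy, (hπ x).ne', (hπ y).ne', sub_eq_zero] using hterm

theorem dirichletForm_self_pos (hπ : ∀ x, 0 < π x) (hk : ∀ x y, 0 ≤ k x y)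
    (hconn : (SimpleGraph.fromRel fun x y => k x y ≠ 0).Connected)
    {g : X → ℝ} (hg : g ≠ 0) (hm : ∑ x, π x * g x = 0) : 0 < dirichletForm π k g g := by
  refine (dirichletForm_self_nonneg hπ hk g).lt_of_ne' fun h => hg ?_
  have hadj : ∀ a b, (SimpleGraph.fromRel fun x y => k x y ≠ 0).Adj a b → g a = g b := by
    rintro a b ⟨-, hab | hba⟩
    exacts [eq_of_dirichletForm_self_eq_zero hπ hk h hab,
      (eq_of_dirichletForm_self_eq_zero hπ hk h hba).symm]
  obtain ⟨x₀⟩ := hconn.nonempty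
  have hconst : g = fun _ => g x₀ := funext fun x => (hconn.preconnected x x₀).eq_of_forall_adj hadj
  have hπsum : 0 < ∑ x, π x := sum_pos (fun x _ => hπ x) ⟨x₀, mem_univ x₀⟩
  rw [hconst, ← sum_mul] at hm
  rw [hconst, (mul_eq_zero.1 hm).resolve_left hπsum.ne']
  rfl

end DirichletForm

theorem supNorm_eq_norm {X : Type} [Fintype X] (f : X → ℝ) : supNorm f = ‖f‖ := by
  rcases isEmpty_or_nonempty X with hX | hX
  · simp [supNorm, Subsingleton.elim f 0]
  refine le_antisymm (ciSup_le fun x => norm_le_pi_norm f x) <|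
    (pi_norm_le_iff_of_nonneg (Real.iSup_nonneg fun x => abs_nonneg (f x))).2 fun x =>
      (Real.norm_eq_abs _).trans_le (le_ciSup (f := fun x => |f x|) (Set.finite_range _).bddAbove x)

section EnergyRatio

variable {X : Type} [Fintype X] (π : X → ℝ) (k : X → X → ℝ) (p : ℝ)

def energyRatio (g : X → ℝ) : ℝ :=
  dirichletForm π k g g * ‖g‖ ^ ((4 - 2 * p) / p) / (∑ x, π x * g x ^ 2) ^ (2 / p)

theorem Kconst_eq_sInf :
    Kconst π k p = sInf (energyRatio π k p '' {g | g ≠ 0 ∧ ∑ x, π x * g x = 0}) := by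
  simp only [Kconst, energyRatio, supNorm_eq_norm, Set.image, Set.mem_ofPred_eq, and_assoc,
    eq_comm (a := dirichletForm π k _ _ * _ / _)]

variable {π k p}

theorem energyRatio_nonneg (hπ : ∀ x, 0 < π x) (hk : ∀ x y, 0 ≤ k x y) (g : X → ℝ) :
    0 ≤ energyRatio π k p g :=
  div_nonneg (mul_nonneg (dirichletForm_self_nonneg hπ hk g) (by positivity))
    (Real.rpow_nonneg (sum_nonneg fun x _ => mul_nonneg (hπ x).le (sq_nonneg _)) _)

theorem energyRatio_smul (hπ : ∀ x, 0 < π x) (hp : p ≠ 0) {c : ℝ} (hc : 0 < c)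
    (g : X → ℝ) : energyRatio π k p (c • g) = energyRatio π k p g := by
  have hN : ∑ x, π x * (c • g) x ^ 2 = c ^ 2 * ∑ x, π x * g x ^ 2 := by
    simp only [Pi.smul_apply, smul_eq_mul, mul_sum]
    exact sum_congr rfl fun x _ => by ring
  have hpow : (c ^ 2) ^ (2 / p) = c ^ 2 * c ^ ((4 - 2 * p) / p) := by
    rw [← Real.rpow_natCast, ← Real.rpow_mul hc.le, ← Real.rpow_add hc]
    congr 1
    field_simp
    push_cast
    ring
  rw [energyRatio, energyRatio, dirichletForm_smul_self, norm_smul, Real.norm_of_nonneg hc.le,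
    hN, Real.mul_rpow (sq_nonneg c) (sum_nonneg fun x _ => mul_nonneg (hπ x).le (sq_nonneg _)),
    Real.mul_rpow hc.le (norm_nonneg _), hpow,
    show ∀ E n : ℝ, c ^ 2 * E * (c ^ ((4 - 2 * p) / p) * n)
      = c ^ 2 * c ^ ((4 - 2 * p) / p) * (E * n) from fun _ _ => by ring,
    mul_div_mul_left _ _ (by positivity)]

theorem Kconst_le_energyRatio (hπ : ∀ x, 0 < π x) (hk : ∀ x y, 0 ≤ k x y) {g : X → ℝ}
    (hg : g ≠ 0) (hm : ∑ x, π x * g x = 0) : Kconst π k p ≤ energyRatio π k p g := by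
  rw [Kconst_eq_sInf]
  exact csInf_le ⟨0, Set.forall_mem_image.2 fun g _ => energyRatio_nonneg hπ hk g⟩
    ⟨g, ⟨hg, hm⟩, rfl⟩

/-- `energyRatio` is scale invariant, so it suffices to minimise it over the compact set of
mean-zero functions of sup norm one, where it is continuous and positive. -/
theorem Kconst_pos (hπ : ∀ x, 0 < π x) (hk : ∀ x y, 0 ≤ k x y)
    (hconn : (SimpleGraph.fromRel fun x y => k x y ≠ 0).Connected) (hp : 0 < p)
    {f : X → ℝ} (hf : f ≠ 0) (hm : ∑ x, π x * f x = 0) : 0 < Kconst π k p := by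
  set S : Set (X → ℝ) := {g | ∑ x, π x * g x = 0} ∩ Metric.sphere 0 1
  have hnormalize : ∀ g : X → ℝ, g ≠ 0 → ∑ x, π x * g x = 0 → ‖g‖⁻¹ • g ∈ S := by
    intro g hg hgm
    refine ⟨?_, by simp [norm_smul, norm_ne_zero_iff.2 hg]⟩
    simp only [Set.mem_ofPred_eq, Pi.smul_apply, smul_eq_mul, mul_left_comm (π _), ← mul_sum, hgm,
      mul_zero]
  have hS_ne_zero : ∀ g ∈ S, g ≠ 0 := fun g hg h => by simp [S, h] at hg
  have hS : IsCompact S :=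
    (isCompact_sphere 0 1).inter_left (isClosed_eq (by fun_prop) continuous_const)
  have hcont : ContinuousOn (energyRatio π k p) S := by
    refine ContinuousOn.div (ContinuousOn.mul ?_ ?_) ?_ ?_
    · unfold dirichletForm; fun_prop
    · exact continuous_norm.continuousOn.rpow_const fun g hg => Or.inl (by simp_all [S])
    · exact (by fun_prop : Continuous fun g : X → ℝ => ∑ x, π x * g x ^ 2).continuousOn.rpow_const
        fun g _ => Or.inr (by positivity)
    · exact fun g hg => (Real.rpow_pos_of_pos (sum_mul_sq_pos hπ (hS_ne_zero g hg)) _).ne'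
  obtain ⟨g₀, hg₀, hmin⟩ := hS.exists_isMinOn ⟨_, hnormalize f hf hm⟩ hcont
  have hpos : 0 < energyRatio π k p g₀ :=
    div_pos (mul_pos (dirichletForm_self_pos hπ hk hconn (hS_ne_zero g₀ hg₀) hg₀.1)
      (Real.rpow_pos_of_pos (norm_pos_iff.2 (hS_ne_zero g₀ hg₀)) _))
      (Real.rpow_pos_of_pos (sum_mul_sq_pos hπ (hS_ne_zero g₀ hg₀)) _)
  rw [Kconst_eq_sInf]
  refine hpos.trans_le (le_csInf ⟨_, f, ⟨hf, hm⟩, rfl⟩ ?_)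
  rintro _ ⟨g, ⟨hg, hgm⟩, rfl⟩
  exact (hmin (hnormalize g hg hgm)).trans_eq
    (energyRatio_smul hπ hp.ne' (inv_pos.2 (norm_pos_iff.2 hg)) g)

end EnergyRatio

section Semigroup

variable {X : Type} [Fintype X] [DecidableEq X] (π : X → ℝ) (k : X → X → ℝ)

theorem genMat_mulVec_apply (g : X → ℝ) (x : X) :
    (genMat π k *ᵥ g) x = ∑ y, k x y * π y * (g y - g x) := by
  simp only [genMat, mulVec, dotProduct, sub_mul, ite_mul, zero_mul, sum_sub_distrib,
    sum_ite_eq, mem_univ, if_true, mul_sub, sum_mul]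

theorem genMat_mulVec_one : genMat π k *ᵥ 1 = 0 := by
  ext x
  simp [genMat_mulVec_apply]

/-- Summation by parts: swapping `x` and `y` (using the symmetry of `k`) and averaging
turns `g x (h y - h x)` into `-(g x - g y) (h x - h y) / 2`. -/
theorem sum_mul_genMat_mulVec (hks : ∀ x y, k x y = k y x) (g h : X → ℝ) :
    ∑ x, π x * g x * (genMat π k *ᵥ h) x = -dirichletForm π k g h := by
  set T : X → X → ℝ := fun x y => π x * π y * k x y * g x * (h y - h x)
  have hT : ∑ x, π x * g x * (genMat π k *ᵥ h) x = ∑ x, ∑ y, T x y := by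
    refine sum_congr rfl fun x _ => ?_
    rw [genMat_mulVec_apply, mul_sum]
    exact sum_congr rfl fun y _ => by ring
  have hE : dirichletForm π k g h = -(1 / 2) * (∑ x, ∑ y, T x y + ∑ x, ∑ y, T y x) := by
    simp only [dirichletForm, ← sum_add_distrib]
    rw [neg_mul, ← mul_neg, ← sum_neg_distrib]
    refine congrArg _ (sum_congr rfl fun x _ => ?_)
    rw [← sum_neg_distrib]
    refine sum_congr rfl fun y _ => ?_
    simp only [T, hks y x]
    ring
  rw [hT, hE, sum_comm (f := fun x y => T y x)]
  ring

theorem smg_zero (f : X → ℝ) : smg π k 0 f = f := by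
  simp [smg]

theorem hasDerivAt_smg (f : X → ℝ) (t : ℝ) :
    HasDerivAt (fun s => smg π k s f) (genMat π k *ᵥ smg π k t f) t :=
  hasDerivAt_exp_smul_mulVec _ f t

theorem smg_ne_zero {f : X → ℝ} (hf : f ≠ 0) (t : ℝ) : smg π k t f ≠ 0 := by
  simpa [smg] using (mulVec_injective_iff_isUnit.2 (isUnit_exp (t • genMat π k))).ne hf

theorem norm_smg_le (hπ : ∀ x, 0 < π x) (hk : ∀ x y, 0 ≤ k x y) {t : ℝ} (ht : 0 ≤ t)
    (f : X → ℝ) : ‖smg π k t f‖ ≤ ‖f‖ := by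
  refine norm_mulVec_le_of_stochastic (exp_apply_nonneg_of_offDiag fun x y hxy => ?_)
    (exp_mulVec_of_mulVec_eq_zero ?_) f
  · simpa using mul_nonneg ht (by simpa [genMat, hxy] using mul_nonneg (hk x y) (hπ y).le)
  · rw [smul_mulVec, genMat_mulVec_one, smul_zero]

theorem sum_mul_smg (hks : ∀ x y, k x y = k y x) (f : X → ℝ) (t : ℝ) :
    ∑ x, π x * smg π k t f x = ∑ x, π x * f x := by
  have hd : ∀ s, HasDerivAt (fun s => ∑ x, π x * smg π k s f x) 0 s := by
    intro s
    refine (HasDerivAt.fun_sum fun x _ =>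
      (hasDerivAt_pi.1 (hasDerivAt_smg π k f s) x).const_mul (π x)).congr_deriv ?_
    simpa [dirichletForm] using sum_mul_genMat_mulVec π k hks 1 (smg π k s f)
  simpa [smg_zero] using
    is_const_of_deriv_eq_zero (fun s => (hd s).differentiableAt) (fun s => (hd s).deriv) t 0

theorem hasDerivAt_sum_mul_smg_sq (hks : ∀ x y, k x y = k y x) (f : X → ℝ) (t : ℝ) :
    HasDerivAt (fun s => ∑ x, π x * smg π k s f x ^ 2)
      (-2 * dirichletForm π k (smg π k t f) (smg π k t f)) t := by
  refine (HasDerivAt.fun_sum fun x _ =>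
    ((hasDerivAt_pi.1 (hasDerivAt_smg π k f t) x).pow 2).const_mul (π x)).congr_deriv ?_
  rw [neg_mul, ← mul_neg, ← sum_mul_genMat_mulVec π k hks, mul_sum]
  exact sum_congr rfl fun x _ => by push_cast; ring

end Semigroup

theorem le_rpow_neg_inv_of_hasDerivAt_le {u u' : ℝ → ℝ} {β c t : ℝ} (hβ : 0 < β) (hc : 0 < c)
    (ht : 0 < t) (hu : ∀ s, 0 < u s) (hd : ∀ s, HasDerivAt u (u' s) s)
    (hle : ∀ s, 0 < s → u' s ≤ -c * u s ^ (β + 1)) : u t ≤ (β * c * t) ^ (-β⁻¹) := by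
  set w : ℝ → ℝ := fun s => u s ^ (-β)
  have hw : ∀ s, HasDerivAt w (u' s * -β * u s ^ (-β - 1)) s := fun s =>
    (hd s).rpow_const (Or.inl (hu s).ne')
  have hw' : ∀ s ∈ interior (Set.Ici 0), β * c ≤ deriv w s := by
    intro s hs
    rw [interior_Ici] at hs
    have hcancel : u s ^ (β + 1) * u s ^ (-β - 1) = 1 := by
      rw [← Real.rpow_add (hu s)]
      simp
    have hpos : 0 < u s ^ (-β - 1) := Real.rpow_pos_of_pos (hu s) _
    calc β * c = β * (c * u s ^ (β + 1) * u s ^ (-β - 1)) := by rw [mul_assoc, hcancel, mul_one]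
      _ ≤ β * (-u' s * u s ^ (-β - 1)) := by gcongr; linarith [hle s hs]
      _ = deriv w s := by rw [(hw s).deriv]; ring
  have hgrowth := (convex_Ici 0).mul_sub_le_image_sub_of_le_deriv
    (fun s _ => (hw s).continuousAt.continuousWithinAt)
    (fun s _ => (hw s).differentiableAt.differentiableWithinAt) hw' 0 Set.self_mem_Ici t ht.le ht.le
  have hwt : β * c * t ≤ w t := by
    have := Real.rpow_pos_of_pos (hu 0) (-β)
    simp only [w, sub_zero] at hgrowth ⊢
    linarith
  calc u t = w t ^ (-β⁻¹) := by
        rw [← Real.rpow_mul (hu t).le, neg_mul_neg, mul_inv_cancel₀ hβ.ne', Real.rpow_one]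
    _ ≤ (β * c * t) ^ (-β⁻¹) :=
        Real.rpow_le_rpow_of_nonpos (by positivity) hwt (by simp [hβ.le])

theorem Kconst_mul_rpow_le_dirichletForm_smg {X : Type} [Fintype X] [DecidableEq X]
    {π : X → ℝ} {k : X → X → ℝ} {p : ℝ} (hπ : ∀ x, 0 < π x) (hk : ∀ x y, 0 ≤ k x y)
    (hks : ∀ x y, k x y = k y x) (hp0 : 0 < p) (hp2 : p ≤ 2) {f : X → ℝ} (hf : f ≠ 0)
    (hm : ∑ x, π x * f x = 0) {s : ℝ} (hs : 0 ≤ s) :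
    Kconst π k p * (∑ x, π x * smg π k s f x ^ 2) ^ (2 / p) ≤
      dirichletForm π k (smg π k s f) (smg π k s f) * ‖f‖ ^ ((4 - 2 * p) / p) := by
  have hg := smg_ne_zero π k hf s
  have hK := Kconst_le_energyRatio (p := p) hπ hk hg ((sum_mul_smg π k hks f s).trans hm)
  rw [energyRatio, le_div_iff₀ (Real.rpow_pos_of_pos (sum_mul_sq_pos hπ hg) _)] at hK
  refine hK.trans (mul_le_mul_of_nonneg_left ?_ (dirichletForm_self_nonneg hπ hk _))
  exact Real.rpow_le_rpow (norm_nonneg _) (norm_smg_le π k hπ hk hs f)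
    (div_nonneg (by linarith) hp0.le)

theorem rpow_neg_inv_rate_eq {p K t N : ℝ} (hp0 : 0 < p) (hp2 : p < 2) (hKt : 0 ≤ K * t)
    (hN : 0 < N) :
    ((2 - p) / p * (2 * K / N ^ ((4 - 2 * p) / p)) * t) ^ (-((2 - p) / p)⁻¹) =
      ((4 - 2 * p) / p) ^ (-(p / (2 - p))) * (K * t) ^ (-(p / (2 - p))) * N ^ 2 := by
  set a := (4 - 2 * p) / p
  have ha : 0 ≤ a := div_nonneg (by linarith) hp0.le
  have hNa : 0 < N ^ a := Real.rpow_pos_of_pos hN a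
  have hbase : (2 - p) / p * (2 * K / N ^ a) * t = a * (K * t) * (N ^ a)⁻¹ := by
    simp only [a]
    field_simp
    ring
  have hexp : a * (p / (2 - p)) = 2 := by
    simp only [a]
    field_simp [(by linarith : 2 - p ≠ 0)]
    ring
  rw [hbase, inv_div, Real.mul_rpow (mul_nonneg ha hKt) (inv_nonneg.2 hNa.le),
    Real.mul_rpow ha hKt, Real.inv_rpow hNa.le, ← Real.rpow_neg hNa.le, neg_neg,
    ← Real.rpow_mul hN.le, hexp, Real.rpow_two]

theorem statement2_general {X : Type} [Fintype X] [DecidableEq X]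
    (π : X → ℝ) (hπpos : ∀ x, 0 < π x)
    (k : X → X → ℝ) (hknn : ∀ x y, 0 ≤ k x y) (hksymm : ∀ x y, k x y = k y x)
    (hconn : (SimpleGraph.fromRel fun x y => k x y ≠ 0).Connected)
    (p : ℝ) (hp : p ∈ Set.Ioc (0 : ℝ) 1)
    (f : X → ℝ) (hf : ∑ x, π x * f x = 0) (t : ℝ) (ht : 0 < t) :
    ∑ x, π x * (smg π k t f x) ^ 2 ≤
      ((4 - 2 * p) / p) ^ (-(p / (2 - p))) * (Kconst π k p * t) ^ (-(p / (2 - p))) *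
        supNorm f ^ 2 := by
  obtain ⟨hp0, hp1⟩ := hp
  rcases eq_or_ne f 0 with rfl | hf0
  · simp [smg, supNorm_eq_norm]
  set a := (4 - 2 * p) / p
  have hK := Kconst_pos hπpos hknn hconn hp0 hf0 hf
  have hfa : 0 < ‖f‖ ^ a := Real.rpow_pos_of_pos (norm_pos_iff.2 hf0) a
  have hdecay := le_rpow_neg_inv_of_hasDerivAt_le (β := (2 - p) / p)
    (c := 2 * Kconst π k p / ‖f‖ ^ a) (div_pos (by linarith) hp0) (by positivity) ht
    (fun s => sum_mul_sq_pos hπpos (smg_ne_zero π k hf0 s))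
    (hasDerivAt_sum_mul_smg_sq π k hksymm f) fun s hs => ?_
  · rwa [supNorm_eq_norm, ← rpow_neg_inv_rate_eq hp0 (by linarith) (by positivity)
      (norm_pos_iff.2 hf0)]
  · have := Kconst_mul_rpow_le_dirichletForm_smg hπpos hknn hksymm hp0 (by linarith) hf0 hf hs.le
    rw [show (2 - p) / p + 1 = 2 / p by field_simp; ring, neg_mul, neg_mul, neg_le_neg_iff,
      div_mul_eq_mul_div, div_le_iff₀ hfa]
    linarith

theorem statement2 {X : Type} [Fintype X] [DecidableEq X] [Nonempty X]
    (π : X → ℝ) (hπpos : ∀ x, 0 < π x) (hπ1 : ∑ x, π x = 1)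
    (k : X → X → ℝ) (hknn : ∀ x y, 0 ≤ k x y) (hksymm : ∀ x y, k x y = k y x)
    (hconn : (SimpleGraph.fromRel fun x y => k x y ≠ 0).Connected)
    (p : ℝ) (hp : p ∈ Set.Ioc (0 : ℝ) 1)
    (f : X → ℝ) (hf : ∑ x, π x * f x = 0) (t : ℝ) (ht : 0 < t) :
    ∑ x, π x * (smg π k t f x) ^ 2 ≤
      ((4 - 2 * p) / p) ^ (-(p / (2 - p))) * (Kconst π k p * t) ^ (-(p / (2 - p))) *
        supNorm f ^ 2 :=
  statement2_general π hπpos k hknn hksymm hconn p hp f hf t ht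
end
end

section
/- Let p ∈ (0,1) and let λ : 𝒳 → (0,∞) and μ : 𝒳 → (0,∞) be two positive functions. Then for every probability measure η on 𝒳, 1/L_η(p) ≤ 2^{2/p − 1} · ( Σ_x π(x) λ(x)^{p/(1−p)} · Σ_y η(y) μ(y)^{p/(1−p)} )^{(2−2p)/p} · ( Σ_{e : Q(e) ≠ 0} (1/Q(e)) · ( Σ_{x,y : e ∈ γ(x,y)} π(x)η(y)/(λ(x)μ(y)) )² ). -/
open scoped BigOperators

noncomputable section

/-- The generalized Poincaré constant `L_η(p)`. -/
def genPoincare {X : Type} [Fintype X] (π : X → ℝ) (k : X → X → ℝ)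
    (η : X → ℝ) (p : ℝ) : ℝ :=
  sInf { r : ℝ | ∃ f : X → ℝ, f ≠ 0 ∧ (∑ x, π x * f x) = 0 ∧ (∑ x, η x * |f x|) ≠ 0 ∧
    r = dirichletForm π k f f * supNorm f ^ ((2 - 2 * p) / p) /
      (∑ x, η x * |f x|) ^ (2 / p) }

/-- The (ordered) edges of a path given as its list of successive vertices. -/
def pathEdges {X : Type} (l : List X) : List (X × X) := l.zip l.tail

/-- The weight `Q(e) = k(x,y) π(x) π(y)` of an edge `e = (x,y)`. -/
def Qw {X : Type} (π : X → ℝ) (k : X → X → ℝ) (e : X × X) : ℝ :=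
  k e.1 e.2 * π e.1 * π e.2

/-!
Write `w(x,y) = π(x)η(y)/(λ(x)μ(y))` and `q = p/(1-p)`. Since `π(f) = 0`,
`η(|f|) ≤ Σ_{x,y} π(x)η(y)|f(y) - f(x)|`. In each term `|f(y) - f(x)|^(1-p) ≤ (2‖f‖_∞)^(1-p)`, and
Hölder with exponents `1/p`, `1/(1-p)` gives
`η(|f|) ≤ (2‖f‖_∞)^(1-p) (Σ w(x,y)|f(y) - f(x)|)^p (π(λ^q) η(μ^q))^(1-p)`:
the factors `(λ(x)μ(y))^q` are exactly what `w` divides out. Telescoping `f` along `γ(x,y)` and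
Cauchy–Schwarz over the edges with weights `Q(e)` bound the square of the middle sum by `2E(f,f)`
times `Σ_e W(e)²/Q(e)`, where `W(e)` is the `w`-mass of the paths through `e`. Raising to the power
`2/p` yields `η(|f|)^(2/p) ≤ C E(f,f) ‖f‖_∞^((2-2p)/p)` with `C` the claimed bound on `1/L_η(p)`.
-/

open Finset

section PathEdges

variable {X : Type}

lemma pathEdges_cons_cons (a b : X) (l : List X) :
    pathEdges (a :: b :: l) = (a, b) :: pathEdges (b :: l) := rfl

lemma fst_mem_of_mem_pathEdges {e : X × X} {l : List X} (h : e ∈ pathEdges l) : e.1 ∈ l :=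
  (List.of_mem_zip h).1

lemma pathEdges_subset_cons (a : X) : ∀ l : List X, pathEdges l ⊆ pathEdges (a :: l)
  | [] => by simp [pathEdges]
  | b :: l => by rw [pathEdges_cons_cons]; exact List.subset_cons_self _ _

lemma pathEdges_subset_append (l₂ : List X) :
    ∀ l₁ : List X, pathEdges l₂ ⊆ pathEdges (l₁ ++ l₂)
  | [] => List.Subset.refl _
  | a :: l₁ => List.Subset.trans (pathEdges_subset_append l₂ l₁) (pathEdges_subset_cons a _)

/-- The sum runs over distinct edges, so a walk that returns to its start is first cut at that
return. -/
lemma abs_sub_le_sum_pathEdges [DecidableEq X] (f : X → ℝ) :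
    ∀ (l : List X) {x y : X}, l.head? = some x → l.getLast? = some y →
      |f y - f x| ≤ ∑ e ∈ (pathEdges l).toFinset, |f e.2 - f e.1|
  | [], _, _, hx, _ => by simp at hx
  | [a], x, y, hx, hy => by
    simp only [List.head?_cons, List.getLast?_singleton, Option.some.injEq] at hx hy
    subst hx hy
    simp [pathEdges]
  | a :: b :: l, x, y, hx, hy => by
    simp only [List.head?_cons, Option.some.injEq] at hx
    subst hx
    rw [List.getLast?_cons_cons] at hy
    by_cases ha : a ∈ b :: l
    · obtain ⟨l₁, l₂, hl⟩ := List.append_of_mem ha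
      have hy' : (a :: l₂).getLast? = some y := by
        rwa [hl, List.getLast?_append_of_ne_nil _ (List.cons_ne_nil _ _)] at hy
      have hsub : (pathEdges (a :: l₂)).toFinset ⊆ (pathEdges (a :: b :: l)).toFinset := by
        intro e he
        rw [List.mem_toFinset, hl, ← List.cons_append] at *
        exact pathEdges_subset_append _ _ he
      calc |f y - f a| ≤ ∑ e ∈ (pathEdges (a :: l₂)).toFinset, |f e.2 - f e.1| :=
            abs_sub_le_sum_pathEdges f (a :: l₂) rfl hy'
        _ ≤ ∑ e ∈ (pathEdges (a :: b :: l)).toFinset, |f e.2 - f e.1| :=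
            sum_le_sum_of_subset_of_nonneg hsub fun _ _ _ ↦ abs_nonneg _
    · have hab : (a, b) ∉ (pathEdges (b :: l)).toFinset := fun h ↦
        ha (fst_mem_of_mem_pathEdges (List.mem_toFinset.1 h))
      rw [pathEdges_cons_cons, List.toFinset_cons, sum_insert hab]
      calc |f y - f a| ≤ |f b - f a| + |f y - f b| := by
            rw [add_comm]; exact abs_sub_le _ _ _
        _ ≤ _ := add_le_add_right (abs_sub_le_sum_pathEdges f (b :: l) rfl hy) _
termination_by l => l.length
decreasing_by
  all_goals simp only [List.length_cons]
  · have := congrArg List.length hl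
    simp only [List.length_append, List.length_cons] at this
    omega
  · omega

end PathEdges

section DirichletForm

variable {X : Type}

lemma Qw_nonneg {π : X → ℝ} {k : X → X → ℝ} (hπ : ∀ x, 0 ≤ π x) (hk : ∀ x y, 0 ≤ k x y)
    (e : X × X) : 0 ≤ Qw π k e :=
  mul_nonneg (mul_nonneg (hk _ _) (hπ _)) (hπ _)

variable [Fintype X]

lemma abs_le_supNorm (f : X → ℝ) (x : X) : |f x| ≤ supNorm f :=
  le_ciSup (f := fun x ↦ |f x|) (Set.finite_range _).bddAbove x

lemma supNorm_nonneg (f : X → ℝ) : 0 ≤ supNorm f :=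
  Real.iSup_nonneg fun _ ↦ abs_nonneg _

lemma abs_sub_le_two_mul_supNorm (f : X → ℝ) (x y : X) : |f y - f x| ≤ 2 * supNorm f := by
  linarith [abs_sub (f y) (f x), abs_le_supNorm f x, abs_le_supNorm f y]

lemma sum_Qw_mul_sq (π : X → ℝ) (k : X → X → ℝ) (f : X → ℝ) :
    ∑ e : X × X, Qw π k e * (f e.2 - f e.1) ^ 2 = 2 * dirichletForm π k f f := by
  rw [dirichletForm, Fintype.sum_prod_type, ← mul_assoc, mul_one_div_cancel two_ne_zero, one_mul]
  refine sum_congr rfl fun x _ ↦ sum_congr rfl fun y _ ↦ ?_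
  rw [Qw]
  ring

end DirichletForm

lemma sq_sum_mul_le_sum_mul_sq_mul_sum_sq_div {ι : Type*} (s : Finset ι) {q a b : ι → ℝ}
    (hq : ∀ i ∈ s, 0 ≤ q i) (hb : ∀ i ∈ s, q i = 0 → b i = 0) :
    (∑ i ∈ s, b i * a i) ^ 2 ≤ (∑ i ∈ s, q i * a i ^ 2) * ∑ i ∈ s, b i ^ 2 / q i := by
  refine sum_sq_le_sum_mul_sum_of_sq_le_mul s
    (fun i hi ↦ mul_nonneg (hq i hi) (sq_nonneg _)) (fun i hi ↦ div_nonneg (sq_nonneg _) (hq i hi))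
    fun i hi ↦ le_of_eq ?_
  rcases (hq i hi).eq_or_lt with hqi | hqi
  · simp [hb i hi hqi.symm]
  · field_simp

section CanonicalPaths

variable {X : Type} [Fintype X] [DecidableEq X]

def edgeLoad (γ : X → X → List X) (w : X → X → ℝ) (e : X × X) : ℝ :=
  ∑ x, ∑ y, if x ≠ y ∧ e ∈ pathEdges (γ x y) then w x y else 0

def pathCongestion (π : X → ℝ) (k : X → X → ℝ) (γ : X → X → List X) (w : X → X → ℝ) : ℝ :=
  ∑ e : X × X, if Qw π k e ≠ 0 then 1 / Qw π k e * edgeLoad γ w e ^ 2 else 0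

lemma pathCongestion_nonneg {π : X → ℝ} {k : X → X → ℝ} (hπ : ∀ x, 0 ≤ π x)
    (hk : ∀ x y, 0 ≤ k x y) (γ : X → X → List X) (w : X → X → ℝ) :
    0 ≤ pathCongestion π k γ w :=
  sum_nonneg fun e _ ↦ by
    split_ifs
    exacts [mul_nonneg (one_div_nonneg.2 (Qw_nonneg hπ hk e)) (sq_nonneg _), le_rfl]

lemma sum_mul_abs_sub_le_sum_edgeLoad {γ : X → X → List X}
    (hγ : ∀ x y, x ≠ y → (γ x y).head? = some x ∧ (γ x y).getLast? = some y)
    {w : X → X → ℝ} (hw : ∀ x y, 0 ≤ w x y) (f : X → ℝ) :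
    ∑ x, ∑ y, w x y * |f y - f x| ≤ ∑ e : X × X, edgeLoad γ w e * |f e.2 - f e.1| := by
  have hload : ∑ e : X × X, edgeLoad γ w e * |f e.2 - f e.1| =
      ∑ x, ∑ y, ∑ e : X × X,
        if x ≠ y ∧ e ∈ pathEdges (γ x y) then w x y * |f e.2 - f e.1| else 0 := by
    simp only [edgeLoad, sum_mul, ite_mul, zero_mul]
    rw [sum_comm]
    exact sum_congr rfl fun x _ ↦ sum_comm
  rw [hload]
  refine sum_le_sum fun x _ ↦ sum_le_sum fun y _ ↦ ?_
  by_cases hxy : x = y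
  · subst hxy
    simp
  · simp only [ne_eq, hxy, not_false_eq_true, true_and]
    rw [← sum_filter, ← mul_sum]
    refine mul_le_mul_of_nonneg_left ?_ (hw x y)
    refine (abs_sub_le_sum_pathEdges f (γ x y) (hγ x y hxy).1 (hγ x y hxy).2).trans_eq
      (sum_congr ?_ fun _ _ ↦ rfl)
    ext e
    simp

lemma edgeLoad_eq_zero_of_Qw_eq_zero {π : X → ℝ} {k : X → X → ℝ} (hπ : ∀ x, 0 < π x)
    {γ : X → X → List X} (hγ : ∀ x y, x ≠ y → ∀ e ∈ pathEdges (γ x y), k e.1 e.2 ≠ 0)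
    (w : X → X → ℝ) {e : X × X} (he : Qw π k e = 0) : edgeLoad γ w e = 0 := by
  have hk : k e.1 e.2 = 0 := by
    simpa [Qw, (hπ e.1).ne', (hπ e.2).ne'] using he
  refine sum_eq_zero fun x _ ↦ sum_eq_zero fun y _ ↦ if_neg ?_
  rintro ⟨hxy, hmem⟩
  exact hγ x y hxy e hmem hk

theorem sq_sum_mul_abs_sub_le_dirichletForm_mul_pathCongestion {π : X → ℝ} {k : X → X → ℝ}
    (hπ : ∀ x, 0 < π x) (hk : ∀ x y, 0 ≤ k x y) {γ : X → X → List X}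
    (hγ : ∀ x y, x ≠ y → (γ x y).head? = some x ∧ (γ x y).getLast? = some y ∧
      ∀ e ∈ pathEdges (γ x y), k e.1 e.2 ≠ 0)
    {w : X → X → ℝ} (hw : ∀ x y, 0 ≤ w x y) (f : X → ℝ) :
    (∑ x, ∑ y, w x y * |f y - f x|) ^ 2 ≤
      2 * dirichletForm π k f f * pathCongestion π k γ w := by
  have hQ := Qw_nonneg (fun x ↦ (hπ x).le) hk
  calc (∑ x, ∑ y, w x y * |f y - f x|) ^ 2
      ≤ (∑ e : X × X, edgeLoad γ w e * |f e.2 - f e.1|) ^ 2 :=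
        pow_le_pow_left₀
          (sum_nonneg fun x _ ↦ sum_nonneg fun y _ ↦ mul_nonneg (hw x y) (abs_nonneg _))
          (sum_mul_abs_sub_le_sum_edgeLoad (fun x y h ↦ ⟨(hγ x y h).1, (hγ x y h).2.1⟩) hw f) 2
    _ ≤ (∑ e : X × X, Qw π k e * |f e.2 - f e.1| ^ 2) *
          ∑ e : X × X, edgeLoad γ w e ^ 2 / Qw π k e :=
        sq_sum_mul_le_sum_mul_sq_mul_sum_sq_div _ (fun e _ ↦ hQ e) fun e _ ↦
          edgeLoad_eq_zero_of_Qw_eq_zero hπ (fun x y h ↦ (hγ x y h).2.2) w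
    _ = 2 * dirichletForm π k f f * pathCongestion π k γ w := by
      simp only [sq_abs, sum_Qw_mul_sq, pathCongestion]
      congr 1
      refine sum_congr rfl fun e _ ↦ ?_
      split_ifs
      · ring
      · simp_all

end CanonicalPaths

section Interpolation

open Real

lemma mul_le_rpow_mul_rpow_mul_rpow {c d D r p : ℝ} (hc : 0 ≤ c) (hd : 0 ≤ d) (hdD : d ≤ D)
    (hr : 0 < r) (hp1 : p < 1) :
    c * d ≤ D ^ (1 - p) * ((c / r * d) ^ p * (c * r ^ (p / (1 - p))) ^ (1 - p)) := by
  have hp1' : 0 < 1 - p := sub_pos.2 hp1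
  have hsum : p + (1 - p) ≠ 0 := by norm_num
  have hc1 : c ^ p * c ^ (1 - p) = c := by rw [← rpow_add' hc hsum, add_sub_cancel, rpow_one]
  have hd1 : d ^ p * d ^ (1 - p) = d := by rw [← rpow_add' hd hsum, add_sub_cancel, rpow_one]
  have hrhs : (c / r * d) ^ p * (c * r ^ (p / (1 - p))) ^ (1 - p) = c * d ^ p := by
    rw [mul_rpow (div_nonneg hc hr.le) hd, div_rpow hc hr.le, mul_rpow hc (rpow_nonneg hr.le _),
      ← rpow_mul hr.le, div_mul_cancel₀ p hp1'.ne']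
    calc c ^ p / r ^ p * d ^ p * (c ^ (1 - p) * r ^ p)
        = c ^ p * c ^ (1 - p) * d ^ p * (r ^ p / r ^ p) := by ring
      _ = c * d ^ p := by rw [hc1, div_self (rpow_pos_of_pos hr p).ne', mul_one]
  calc c * d = c * (d ^ p * d ^ (1 - p)) := by rw [hd1]
    _ ≤ c * (d ^ p * D ^ (1 - p)) := by gcongr
    _ = D ^ (1 - p) * ((c / r * d) ^ p * (c * r ^ (p / (1 - p))) ^ (1 - p)) := by
      rw [hrhs]; ring

lemma sum_rpow_mul_rpow_le {ι : Type*} (s : Finset ι) {a b : ι → ℝ} (ha : ∀ i ∈ s, 0 ≤ a i)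
    (hb : ∀ i ∈ s, 0 ≤ b i) {p : ℝ} (hp0 : 0 < p) (hp1 : p < 1) :
    ∑ i ∈ s, a i ^ p * b i ^ (1 - p) ≤ (∑ i ∈ s, a i) ^ p * (∑ i ∈ s, b i) ^ (1 - p) := by
  have h := inner_le_Lp_mul_Lq_of_nonneg s (HolderConjugate.inv_one_sub_inv hp0 hp1)
    (fun i hi ↦ rpow_nonneg (ha i hi) p) (fun i hi ↦ rpow_nonneg (hb i hi) (1 - p))
  simp only [one_div, inv_inv] at h
  convert h using 3 <;> refine sum_congr rfl fun i hi ↦ ?_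
  · rw [rpow_rpow_inv (ha i hi) hp0.ne']
  · rw [rpow_rpow_inv (hb i hi) (sub_pos.2 hp1).ne']

lemma rpow_two_div_le_of_le_of_sq_le {N K A B E S p : ℝ} (hN : 0 ≤ N) (hK : 0 ≤ K)
    (hA : 0 ≤ A) (hB : 0 ≤ B) (hp0 : 0 < p)
    (hNA : N ≤ (2 * K) ^ (1 - p) * (A ^ p * B ^ (1 - p))) (hAE : A ^ 2 ≤ 2 * E * S) :
    N ^ (2 / p) ≤ 2 ^ (2 / p - 1) * B ^ ((2 - 2 * p) / p) * S * (E * K ^ ((2 - 2 * p) / p)) := by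
  have h2K : 0 ≤ 2 * K := by positivity
  have hexp : (1 - p) * (2 / p) = (2 - 2 * p) / p := by field_simp
  have hexpA : p * (2 / p) = 2 := by field_simp
  have htwo : (2 : ℝ) ^ (2 / p - 1) = 2 ^ ((2 - 2 * p) / p) * 2 := by
    rw [← rpow_add_one two_ne_zero]
    congr 1
    field_simp
    ring
  calc N ^ (2 / p) ≤ ((2 * K) ^ (1 - p) * (A ^ p * B ^ (1 - p))) ^ (2 / p) := by gcongr
    _ = (2 * K) ^ ((2 - 2 * p) / p) * A ^ 2 * B ^ ((2 - 2 * p) / p) := by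
      rw [mul_rpow (rpow_nonneg h2K _) (mul_nonneg (rpow_nonneg hA _) (rpow_nonneg hB _)),
        mul_rpow (rpow_nonneg hA _) (rpow_nonneg hB _),
        ← rpow_mul h2K, ← rpow_mul hA, ← rpow_mul hB, hexp, hexpA, rpow_two, mul_assoc]
    _ ≤ (2 * K) ^ ((2 - 2 * p) / p) * (2 * E * S) * B ^ ((2 - 2 * p) / p) := by gcongr
    _ = 2 ^ (2 / p - 1) * B ^ ((2 - 2 * p) / p) * S * (E * K ^ ((2 - 2 * p) / p)) := by
      rw [mul_rpow zero_le_two hK, htwo]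
      ring

end Interpolation

section Poincare

variable {X : Type} [Fintype X]

lemma sum_mul_rpow_nonneg {ν g : X → ℝ} (hν : ∀ x, 0 ≤ ν x) (hg : ∀ x, 0 < g x) (s : ℝ) :
    0 ≤ ∑ x, ν x * g x ^ s :=
  sum_nonneg fun x _ ↦ mul_nonneg (hν x) (Real.rpow_nonneg (hg x).le s)

lemma sum_mul_abs_le_sum_mul_abs_sub {π η f : X → ℝ} (hπ : ∀ x, 0 ≤ π x) (hπ1 : ∑ x, π x = 1)
    (hf : ∑ x, π x * f x = 0) (hη : ∀ x, 0 ≤ η x) :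
    ∑ y, η y * |f y| ≤ ∑ x, ∑ y, π x * η y * |f y - f x| := by
  have hcenter : ∀ y, |f y| ≤ ∑ x, π x * |f y - f x| := fun y ↦ by
    have hfy : f y = ∑ x, π x * (f y - f x) := by
      simp only [mul_sub, sum_sub_distrib, ← sum_mul, hπ1, hf, one_mul, sub_zero]
    calc |f y| = |∑ x, π x * (f y - f x)| := by rw [← hfy]
      _ ≤ ∑ x, |π x * (f y - f x)| := abs_sum_le_sum_abs _ _
      _ = ∑ x, π x * |f y - f x| := by simp only [abs_mul, abs_of_nonneg (hπ _)]
  calc ∑ y, η y * |f y| ≤ ∑ y, η y * ∑ x, π x * |f y - f x| :=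
        sum_le_sum fun y _ ↦ mul_le_mul_of_nonneg_left (hcenter y) (hη y)
    _ = ∑ x, ∑ y, π x * η y * |f y - f x| := by
      simp only [mul_sum]
      rw [sum_comm]
      simp only [mul_left_comm, mul_assoc]

theorem sum_mul_abs_le_two_mul_supNorm_rpow_mul {π η f lam mu : X → ℝ} (hπ : ∀ x, 0 ≤ π x)
    (hπ1 : ∑ x, π x = 1) (hf : ∑ x, π x * f x = 0) (hη : ∀ x, 0 ≤ η x)
    (hlam : ∀ x, 0 < lam x) (hmu : ∀ x, 0 < mu x) {p : ℝ} (hp0 : 0 < p) (hp1 : p < 1) :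
    ∑ y, η y * |f y| ≤ (2 * supNorm f) ^ (1 - p) *
      ((∑ x, ∑ y, π x * η y / (lam x * mu y) * |f y - f x|) ^ p *
        ((∑ x, π x * lam x ^ (p / (1 - p))) * (∑ y, η y * mu y ^ (p / (1 - p)))) ^ (1 - p)) := by
  have hπη : ∀ z : X × X, 0 ≤ π z.1 * η z.2 := fun z ↦ mul_nonneg (hπ _) (hη _)
  have hlm : ∀ z : X × X, 0 < lam z.1 * mu z.2 := fun z ↦ mul_pos (hlam _) (hmu _)
  have hM : (∑ x, π x * lam x ^ (p / (1 - p))) * (∑ y, η y * mu y ^ (p / (1 - p))) =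
      ∑ z : X × X, π z.1 * η z.2 * (lam z.1 * mu z.2) ^ (p / (1 - p)) := by
    rw [sum_mul_sum, Fintype.sum_prod_type]
    refine sum_congr rfl fun x _ ↦ sum_congr rfl fun y _ ↦ ?_
    rw [Real.mul_rpow (hlam x).le (hmu y).le]
    ring
  rw [hM, ← Fintype.sum_prod_type' (f := fun x y ↦ π x * η y / (lam x * mu y) * |f y - f x|)]
  calc ∑ y, η y * |f y| ≤ ∑ x, ∑ y, π x * η y * |f y - f x| :=
        sum_mul_abs_le_sum_mul_abs_sub hπ hπ1 hf hη
    _ = ∑ z : X × X, π z.1 * η z.2 * |f z.2 - f z.1| := (Fintype.sum_prod_type' _).symm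
    _ ≤ ∑ z : X × X, (2 * supNorm f) ^ (1 - p) *
          ((π z.1 * η z.2 / (lam z.1 * mu z.2) * |f z.2 - f z.1|) ^ p *
            (π z.1 * η z.2 * (lam z.1 * mu z.2) ^ (p / (1 - p))) ^ (1 - p)) :=
        sum_le_sum fun z _ ↦ mul_le_rpow_mul_rpow_mul_rpow (hπη z) (abs_nonneg _)
          (abs_sub_le_two_mul_supNorm f _ _) (hlm z) hp1
    _ ≤ _ := by
      rw [← mul_sum]
      refine mul_le_mul_of_nonneg_left ?_
        (Real.rpow_nonneg (mul_nonneg zero_le_two (supNorm_nonneg f)) _)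
      exact sum_rpow_mul_rpow_le _
        (fun z _ ↦ mul_nonneg (div_nonneg (hπη z) (hlm z).le) (abs_nonneg _))
        (fun z _ ↦ mul_nonneg (hπη z) (Real.rpow_nonneg (hlm z).le _)) hp0 hp1

theorem rpow_sum_mul_abs_le_dirichletForm [DecidableEq X] {π : X → ℝ} (hπ : ∀ x, 0 < π x)
    (hπ1 : ∑ x, π x = 1) {k : X → X → ℝ} (hk : ∀ x y, 0 ≤ k x y) {γ : X → X → List X}
    (hγ : ∀ x y, x ≠ y → (γ x y).head? = some x ∧ (γ x y).getLast? = some y ∧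
      ∀ e ∈ pathEdges (γ x y), k e.1 e.2 ≠ 0)
    {p : ℝ} (hp0 : 0 < p) (hp1 : p < 1) {lam mu : X → ℝ} (hlam : ∀ x, 0 < lam x)
    (hmu : ∀ x, 0 < mu x) {η : X → ℝ} (hη : ∀ x, 0 ≤ η x) {f : X → ℝ}
    (hf : ∑ x, π x * f x = 0) :
    (∑ x, η x * |f x|) ^ (2 / p) ≤
      2 ^ (2 / p - 1) *
        ((∑ x, π x * lam x ^ (p / (1 - p))) * (∑ y, η y * mu y ^ (p / (1 - p)))) ^
          ((2 - 2 * p) / p) *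
        pathCongestion π k γ (fun x y ↦ π x * η y / (lam x * mu y)) *
      (dirichletForm π k f f * supNorm f ^ ((2 - 2 * p) / p)) := by
  have hw : ∀ x y, 0 ≤ π x * η y / (lam x * mu y) := fun x y ↦
    div_nonneg (mul_nonneg (hπ x).le (hη y)) (mul_pos (hlam x) (hmu y)).le
  have hholder :=
    sum_mul_abs_le_two_mul_supNorm_rpow_mul (fun x ↦ (hπ x).le) hπ1 hf hη hlam hmu hp0 hp1
  have hpaths := sq_sum_mul_abs_sub_le_dirichletForm_mul_pathCongestion hπ hk hγ hw f
  exact rpow_two_div_le_of_le_of_sq_le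
    (sum_nonneg fun x _ ↦ mul_nonneg (hη x) (abs_nonneg _)) (supNorm_nonneg f)
    (sum_nonneg fun x _ ↦ sum_nonneg fun y _ ↦ mul_nonneg (hw x y) (abs_nonneg _))
    (mul_nonneg (sum_mul_rpow_nonneg (fun x ↦ (hπ x).le) hlam _) (sum_mul_rpow_nonneg hη hmu _))
    hp0 hholder hpaths

/-- When no `f` is admissible, `genPoincare = sInf ∅ = 0` and `1 / 0 = 0`, whence `0 ≤ C`. -/
lemma one_div_genPoincare_le {π : X → ℝ} {k : X → X → ℝ} {η : X → ℝ} {p C : ℝ}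
    (hη : ∀ x, 0 ≤ η x) (hC : 0 ≤ C)
    (h : ∀ f : X → ℝ, ∑ x, π x * f x = 0 →
      (∑ x, η x * |f x|) ^ (2 / p) ≤
        C * (dirichletForm π k f f * supNorm f ^ ((2 - 2 * p) / p))) :
    1 / genPoincare π k η p ≤ C := by
  rw [genPoincare]
  set S := { r : ℝ | ∃ f : X → ℝ, f ≠ 0 ∧ (∑ x, π x * f x) = 0 ∧ (∑ x, η x * |f x|) ≠ 0 ∧
    r = dirichletForm π k f f * supNorm f ^ ((2 - 2 * p) / p) / (∑ x, η x * |f x|) ^ (2 / p) }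
  rcases S.eq_empty_or_nonempty with hS | ⟨r₀, hr₀⟩
  · rw [hS, Real.sInf_empty, div_zero]
    exact hC
  have hmem : ∀ r ∈ S, 1 ≤ C * r := by
    rintro _ ⟨f, -, hf, hN, rfl⟩
    have hNpos : 0 < ∑ x, η x * |f x| :=
      (sum_nonneg fun x _ ↦ mul_nonneg (hη x) (abs_nonneg _)).lt_of_ne' hN
    rw [mul_div_assoc', le_div_iff₀ (Real.rpow_pos_of_pos hNpos _), one_mul]
    exact h f hf
  have hCpos : 0 < C := hC.lt_of_ne fun hC0 ↦ absurd (hmem r₀ hr₀) (by simp [← hC0])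
  calc 1 / sInf S ≤ 1 / (1 / C) := by
        refine one_div_le_one_div_of_le (by positivity) (le_csInf ⟨r₀, hr₀⟩ fun r hr ↦ ?_)
        rw [div_le_iff₀ hCpos, mul_comm]
        exact hmem r hr
    _ = C := one_div_one_div C

end Poincare

theorem statement4_general {X : Type} [Fintype X] [DecidableEq X]
    (π : X → ℝ) (hπpos : ∀ x, 0 < π x) (hπ1 : ∑ x, π x = 1)
    (k : X → X → ℝ) (hknn : ∀ x y, 0 ≤ k x y)
    -- a choice of a path `γ x y` from `x` to `y` for each pair of distinct points
    (γ : X → X → List X)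
    (hγ : ∀ x y, x ≠ y → (γ x y).head? = some x ∧ (γ x y).getLast? = some y ∧
      ∀ e ∈ pathEdges (γ x y), k e.1 e.2 ≠ 0)
    (p : ℝ) (hp : p ∈ Set.Ioo (0 : ℝ) 1)
    (lam mu : X → ℝ) (hlam : ∀ x, 0 < lam x) (hmu : ∀ x, 0 < mu x)
    (η : X → ℝ) (hηnn : ∀ x, 0 ≤ η x) :
    1 / genPoincare π k η p ≤
      (2 : ℝ) ^ (2 / p - 1) *
        ((∑ x, π x * lam x ^ (p / (1 - p))) * (∑ y, η y * mu y ^ (p / (1 - p)))) ^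
          ((2 - 2 * p) / p) *
        (∑ e : X × X, if Qw π k e ≠ 0 then
          (1 / Qw π k e) *
            (∑ x, ∑ y, if x ≠ y ∧ e ∈ pathEdges (γ x y) then
              π x * η y / (lam x * mu y) else 0) ^ 2
          else 0) := by
  obtain ⟨hp0, hp1⟩ := hp
  have hM : 0 ≤ (∑ x, π x * lam x ^ (p / (1 - p))) * (∑ y, η y * mu y ^ (p / (1 - p))) :=
    mul_nonneg (sum_mul_rpow_nonneg (fun x ↦ (hπpos x).le) hlam _) (sum_mul_rpow_nonneg hηnn hmu _)
  refine one_div_genPoincare_le hηnn ?_ fun f hf ↦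
    rpow_sum_mul_abs_le_dirichletForm hπpos hπ1 hknn hγ hp0 hp1 hlam hmu hηnn hf
  exact mul_nonneg (mul_nonneg (Real.rpow_nonneg zero_le_two _) (Real.rpow_nonneg hM _))
    (pathCongestion_nonneg (fun x ↦ (hπpos x).le) hknn _ _)

theorem statement4 {X : Type} [Fintype X] [DecidableEq X] [Nonempty X]
    (π : X → ℝ) (hπpos : ∀ x, 0 < π x) (hπ1 : ∑ x, π x = 1)
    (k : X → X → ℝ) (hknn : ∀ x y, 0 ≤ k x y) (hksymm : ∀ x y, k x y = k y x)
    (hconn : (SimpleGraph.fromRel fun x y => k x y ≠ 0).Connected)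
    -- a choice of a path `γ x y` from `x` to `y` for each pair of distinct points
    (γ : X → X → List X)
    (hγ : ∀ x y, x ≠ y → (γ x y).head? = some x ∧ (γ x y).getLast? = some y ∧
      ∀ e ∈ pathEdges (γ x y), k e.1 e.2 ≠ 0)
    (p : ℝ) (hp : p ∈ Set.Ioo (0 : ℝ) 1)
    (lam mu : X → ℝ) (hlam : ∀ x, 0 < lam x) (hmu : ∀ x, 0 < mu x)
    (η : X → ℝ) (hηnn : ∀ x, 0 ≤ η x) (hη1 : ∑ x, η x = 1) :
    1 / genPoincare π k η p ≤
      (2 : ℝ) ^ (2 / p - 1) *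
        ((∑ x, π x * lam x ^ (p / (1 - p))) * (∑ y, η y * mu y ^ (p / (1 - p)))) ^
          ((2 - 2 * p) / p) *
        (∑ e : X × X, if Qw π k e ≠ 0 then
          (1 / Qw π k e) *
            (∑ x, ∑ y, if x ≠ y ∧ e ∈ pathEdges (γ x y) then
              π x * η y / (lam x * mu y) else 0) ^ 2
          else 0) :=
  statement4_general π hπpos hπ1 k hknn γ hγ p hp lam mu hlam hmu η hηnn

end
end

section
/- For every c > 0 there exists N_0(c) such that for all N ≥ N_0(c), with Q-probability at least 1 − e^{−cN} the following holds: for every pair of distinct configurations x, y ∈ {−1,+1}^N there exists a self-avoiding path x = z_0, z_1, …, z_k = y, in which consecutive configurations differ in exactly one coordinate, of length k ≤ N, such that every interior point z_i (0 < i < k) satisfies H(z_i) ≤ √(2(1+c) N log N). -/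
/-!
Let `x ≠ y` differ on the set `D` of `d` coordinates. Flipping the coordinates of `D` in the `d`
cyclic shifts of one fixed order gives `d` geodesics from `x` to `y` with pairwise disjoint
interiors, since a proper prefix of a cyclic shift determines the shift. When `d + 2 ≤ N`, every
coordinate `c ∉ D` gives one more path: flip `c`, then `D`, then `c` back. Its interior points all
have `c` flipped and lie in `insert c D`, so it is disjoint from all the other paths. So there are
always at least `N - 1` paths of length at most `N` whose interiors are pairwise disjoint and have
at most `N` points each. These paths are built as chains of subsets of coordinates, then carried
to configurations by flipping those coordinates of `x`.

For the energies to block every one of these paths, each interior must contain a point above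
`τ = √(2(1+c) N log N)`. A union bound over the ways of choosing one such point per interior,
together with independence, bounds this probability by `(N P(Z > τ))^(N-1)`. The Gaussian
Chernoff bound `P(Z > τ) ≤ exp(-τ² / 2N) = N^(-(1+c))` turns this into `N^(-c(N-1))`. A union
bound over the `4^N` pairs `(x, y)` finishes the proof, because `4^N N^(-c(N-1)) ≤ e^(-cN)` once
`c log N ≥ 2 (log 4 + c)`.
-/

open MeasureTheory ProbabilityTheory Filter
open scoped BigOperators ENNReal

noncomputable section

/-- Spin configurations of the REM (we identify `{-1,+1}` with `Bool`). -/
abbrev Conf (N : ℕ) : Type := Fin N → Bool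

/-- The critical inverse temperature `β_c = √(2 log 2)`. -/
def betaC : ℝ := Real.sqrt (2 * Real.log 2)

/-- The law of the REM Hamiltonian: the coordinates `H σ` are i.i.d. centered
Gaussians of variance `N`. -/
def QN (N : ℕ) : Measure (Conf N → ℝ) := Measure.pi fun _ => gaussianReal 0 N

open Finset
open scoped NNReal

section SelfAvoidingPath

variable {α β : Type*} {R : α → α → Prop} {x y z : α} {l : List α}

def IsSelfAvoidingPath (R : α → α → Prop) (x y : α) (l : List α) : Prop :=
  l.head? = some x ∧ l.getLast? = some y ∧ l.Nodup ∧ l.IsChain R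

lemma isSelfAvoidingPath_singleton (R : α → α → Prop) (x : α) :
    IsSelfAvoidingPath R x x [x] := by
  simp [IsSelfAvoidingPath]

lemma isSelfAvoidingPath_map_range {f : ℕ → α} {n : ℕ} (hf : Set.InjOn f (Set.Iic n))
    (hR : ∀ t < n, R (f t) (f (t + 1))) :
    IsSelfAvoidingPath R (f 0) (f n) ((List.range (n + 1)).map f) := by
  refine ⟨by simp [List.range_succ_eq_map], by simp [List.range_succ], ?_, ?_⟩
  · refine List.Nodup.map_on (fun s hs t ht hst => hf ?_ ?_ hst) List.nodup_range <;> simp_all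
  · simpa [List.isChain_map, List.isChain_range_succ] using hR

lemma IsSelfAvoidingPath.concat (h : IsSelfAvoidingPath R x y l) (hyz : R y z) (hz : z ∉ l) :
    IsSelfAvoidingPath R x z (l ++ [z]) := by
  obtain ⟨hx, hy, hnd, hch⟩ := h
  refine ⟨by simp [List.head?_append, hx], List.getLast?_concat, ?_, ?_⟩
  · exact List.nodup_append.2 ⟨hnd, List.nodup_singleton z, by grind⟩
  · exact List.isChain_append.2 ⟨hch, List.isChain_singleton z, by simp_all⟩

lemma IsSelfAvoidingPath.map {R' : β → β → Prop} {f : α → β} (hf : Function.Injective f)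
    (hR : ∀ a b, R a b → R' (f a) (f b)) (h : IsSelfAvoidingPath R x y l) :
    IsSelfAvoidingPath R' (f x) (f y) (l.map f) := by
  obtain ⟨hx, hy, hnd, hch⟩ := h
  exact ⟨by simp [hx], by simp [hy], hnd.map hf,
    (List.isChain_map f).2 (hch.imp fun a b => hR a b)⟩

lemma forall_mem_zip_tail_iff_isChain : ∀ {l : List α},
    (∀ e ∈ l.zip l.tail, R e.1 e.2) ↔ l.IsChain R
  | [] | [_] => by simp
  | a :: b :: l => by
    simp [List.isChain_cons_cons, ← forall_mem_zip_tail_iff_isChain (l := b :: l)]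

end SelfAvoidingPath

section Flip

variable {ι : Type*}

section

variable [Fintype ι]

def diffSet (x y : ι → Bool) : Finset ι := {i | x i ≠ y i}

lemma card_diffSet (x y : ι → Bool) : #(diffSet x y) = hammingDist x y := rfl

end

variable [DecidableEq ι]

def flipSet (x : ι → Bool) (S : Finset ι) : ι → Bool := fun i => xor (x i) (decide (i ∈ S))

@[simp]
lemma flipSet_empty (x : ι → Bool) : flipSet x ∅ = x := by
  funext i
  simp [flipSet]

variable [Fintype ι]

lemma hammingDist_flipSet (x : ι → Bool) (S T : Finset ι) :
    hammingDist (flipSet x S) (flipSet x T) = #(symmDiff S T) := by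
  unfold hammingDist
  congr 1
  ext i
  by_cases hS : i ∈ S <;> by_cases hT : i ∈ T <;> simp [flipSet, mem_symmDiff, hS, hT]

lemma flipSet_injective (x : ι → Bool) : Function.Injective (flipSet x) := fun S T h => by
  simpa [symmDiff_eq_empty] using (hammingDist_flipSet x S T).symm.trans (hammingDist_eq_zero.2 h)

lemma flipSet_diffSet (x y : ι → Bool) : flipSet x (diffSet x y) = y := by
  funext i
  by_cases h : x i = y i <;> cases hx : x i <;> simp_all [flipSet, diffSet]

end Flip

section PrefixSets

variable {α : Type*} [DecidableEq α] {w : List α} {t : ℕ}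

def prefixSets (w : List α) : List (Finset α) :=
  (List.range (w.length + 1)).map fun t => (w.take t).toFinset

lemma length_prefixSets (w : List α) : (prefixSets w).length = w.length + 1 := by
  simp [prefixSets]

lemma prefixSets_eq_cons (w : List α) : prefixSets w = ∅ :: (prefixSets w).tail := by
  simp [prefixSets, List.range_succ_eq_map]

lemma card_toFinset_take (hw : w.Nodup) (ht : t ≤ w.length) : #(w.take t).toFinset = t := by
  rw [List.toFinset_card_of_nodup ((w.take_sublist t).nodup hw)]
  simpa using ht

lemma card_symmDiff_toFinset_take_succ (hw : w.Nodup) (ht : t < w.length) :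
    #(symmDiff (w.take t).toFinset (w.take (t + 1)).toFinset) = 1 := by
  have hsub : (w.take t).toFinset ⊆ (w.take (t + 1)).toFinset := by
    intro a
    simpa using fun ha => List.take_subset_take_left w (Nat.le_succ t) ha
  rw [symmDiff_of_le hsub, card_sdiff_of_subset hsub, card_toFinset_take hw ht,
    card_toFinset_take hw ht.le]
  simp

lemma isSelfAvoidingPath_prefixSets (hw : w.Nodup) :
    IsSelfAvoidingPath (fun S T => #(symmDiff S T) = 1) ∅ w.toFinset (prefixSets w) := by
  have h := isSelfAvoidingPath_map_range (R := fun S T : Finset α => #(symmDiff S T) = 1)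
    (f := fun t => (w.take t).toFinset) (n := w.length)
    (fun s hs t ht hst => by
      simpa [card_toFinset_take hw hs, card_toFinset_take hw ht] using congrArg card hst)
    (fun t ht => card_symmDiff_toFinset_take_succ hw ht)
  simpa [prefixSets] using h

lemma mem_tail_prefixSets {S : Finset α} :
    S ∈ (prefixSets w).tail ↔ ∃ t, 0 < t ∧ t ≤ w.length ∧ (w.take t).toFinset = S := by
  simp only [prefixSets, List.range_succ_eq_map, List.map_cons, List.tail_cons, List.map_map,
    List.mem_map, List.mem_range, Function.comp_def]
  constructor
  · rintro ⟨t, ht, rfl⟩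
    exact ⟨t + 1, by omega, ht, rfl⟩
  · rintro ⟨_ | t, ht0, ht, rfl⟩
    · omega
    · exact ⟨t, ht, rfl⟩

lemma mem_tail_dropLast_prefixSets {S : Finset α} :
    S ∈ (prefixSets w).tail.dropLast ↔
      ∃ t, 0 < t ∧ t < w.length ∧ (w.take t).toFinset = S := by
  simp only [prefixSets, ← List.tail_dropLast, List.range_succ, List.map_append, List.map_cons,
    List.map_nil, List.dropLast_concat, ← List.map_tail, List.tail_range, List.mem_map,
    List.mem_range'_1]
  grind

lemma mem_tail_prefixSets_cons {c : α} {S : Finset α} (hS : S ∈ (prefixSets (c :: w)).tail) :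
    c ∈ S ∧ S ⊆ insert c w.toFinset := by
  obtain ⟨_ | t, ht0, -, rfl⟩ := mem_tail_prefixSets.1 hS
  · omega
  · rw [List.take_succ_cons, List.toFinset_cons]
    refine ⟨mem_insert_self _ _, insert_subset_insert _ fun a ha => ?_⟩
    rw [List.mem_toFinset] at ha ⊢
    exact List.mem_of_mem_take ha

end PrefixSets

section Rotate

variable {α : Type*} {L : List α} {j j' t : ℕ}

lemma mem_take_rotate_iff (hL : L.Nodup) (hj : j < L.length) (ht : t ≤ L.length) {k : ℕ}
    (hk : k < L.length) :
    L[k] ∈ (L.rotate j).take t ↔ j ≤ k ∧ k < j + t ∨ k + L.length < j + t := by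
  simp only [List.mem_take_iff_getElem, List.length_rotate, List.getElem_rotate,
    hL.getElem_inj_iff]
  constructor
  · rintro ⟨s, hs, rfl⟩
    rw [Nat.add_mod_eq_ite, Nat.mod_eq_of_lt (by omega), Nat.mod_eq_of_lt hj]
    split_ifs <;> omega
  · rintro (h | h)
    · exact ⟨k - j, by omega, by rw [Nat.sub_add_cancel h.1, Nat.mod_eq_of_lt hk]⟩
    · refine ⟨k + L.length - j, by omega, ?_⟩
      rw [Nat.sub_add_cancel (by omega), Nat.add_mod_right, Nat.mod_eq_of_lt hk]

lemma eq_of_toFinset_take_rotate_eq [DecidableEq α] (hL : L.Nodup) (hj : j < L.length)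
    (hj' : j' < L.length) (ht0 : 0 < t) (ht : t < L.length)
    (h : ((L.rotate j).take t).toFinset = ((L.rotate j').take t).toFinset) : j = j' := by
  have key : ∀ k (hk : k < L.length), (j ≤ k ∧ k < j + t ∨ k + L.length < j + t) ↔
      (j' ≤ k ∧ k < j' + t ∨ k + L.length < j' + t) := fun k hk => by
    rw [← mem_take_rotate_iff hL hj ht.le hk, ← mem_take_rotate_iff hL hj' ht.le hk,
      ← List.mem_toFinset, h, List.mem_toFinset]
  -- `j'` lies in the cyclic window starting at `j`, but its cyclic predecessor does not
  have := key j' hj'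
  have := key (if j' = 0 then L.length - 1 else j' - 1) (by split_ifs <;> omega)
  split_ifs at this <;> omega

end Rotate

section SubsetPaths

variable {ι : Type*} [DecidableEq ι]

def subsetPath (D : Finset ι) : ℕ ⊕ ι → List (Finset ι)
  | .inl j => prefixSets (D.toList.rotate j)
  | .inr c => prefixSets (c :: D.toList) ++ [D]

/-- A detour `subsetPath D (.inr c)` has `#D + 3` points, hence is admitted only when
`#D + 2 ≤ card ι`. -/
def subsetPathIndex [Fintype ι] (D : Finset ι) : Finset (ℕ ⊕ ι) :=
  (range #D).disjSum (if #D + 2 ≤ Fintype.card ι then Dᶜ else ∅)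

variable {D : Finset ι}

lemma mem_tail_dropLast_subsetPath_inl {j : ℕ} {S : Finset ι}
    (hS : S ∈ (subsetPath D (.inl j)).tail.dropLast) :
    ∃ t, 0 < t ∧ t < #D ∧ ((D.toList.rotate j).take t).toFinset = S := by
  simpa using mem_tail_dropLast_prefixSets.1 hS

lemma mem_tail_dropLast_subsetPath_inr {c : ι} {S : Finset ι}
    (hS : S ∈ (subsetPath D (.inr c)).tail.dropLast) : c ∈ S ∧ S ⊆ insert c D := by
  rw [subsetPath, List.tail_append_of_ne_nil (by simp [prefixSets]), List.dropLast_concat] at hS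
  simpa using mem_tail_prefixSets_cons hS

variable [Fintype ι]

lemma inl_mem_subsetPathIndex {j : ℕ} : .inl j ∈ subsetPathIndex D ↔ j < #D := by
  simp [subsetPathIndex]

lemma inr_mem_subsetPathIndex {c : ι} :
    .inr c ∈ subsetPathIndex D ↔ c ∉ D ∧ #D + 2 ≤ Fintype.card ι := by
  rw [subsetPathIndex, inr_mem_disjSum]
  split_ifs with h <;> simp [h]

variable (D) in
lemma card_subsetPathIndex : Fintype.card ι - 1 ≤ #(subsetPathIndex D) := by
  rw [subsetPathIndex, card_disjSum, card_range]
  split_ifs with h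
  · rw [card_compl]
    omega
  · rw [card_empty]
    omega

lemma isSelfAvoidingPath_subsetPath (hD : D.Nonempty) {k : ℕ ⊕ ι}
    (hk : k ∈ subsetPathIndex D) :
    IsSelfAvoidingPath (fun S T => #(symmDiff S T) = 1) ∅ D (subsetPath D k) ∧
      (subsetPath D k).length ≤ Fintype.card ι + 1 := by
  cases k with
  | inl j =>
    refine ⟨?_, ?_⟩
    · have h := isSelfAvoidingPath_prefixSets ((List.nodup_rotate (n := j)).2 D.nodup_toList)
      rwa [List.toFinset_eq_of_perm _ _ (D.toList.rotate_perm j), toList_toFinset] at h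
    · simpa [subsetPath, length_prefixSets] using card_le_univ D
  | inr c =>
    obtain ⟨hc, hcard⟩ := inr_mem_subsetPathIndex.1 hk
    have hnd : (c :: D.toList).Nodup := List.nodup_cons.2 ⟨by simpa using hc, D.nodup_toList⟩
    refine ⟨?_, ?_⟩
    · have h := isSelfAvoidingPath_prefixSets hnd
      rw [List.toFinset_cons, toList_toFinset] at h
      refine h.concat ?_ ?_
      · rw [symmDiff_comm, symmDiff_of_le (subset_insert c D), insert_sdiff_cancel hc,
          card_singleton]
      · rw [prefixSets_eq_cons, List.mem_cons, not_or]
        exact ⟨hD.ne_empty, fun hD' => hc (mem_tail_prefixSets_cons hD').1⟩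
    · simp only [subsetPath, List.length_append, length_prefixSets, List.length_cons,
        length_toList, List.length_nil]
      omega

lemma pairwiseDisjoint_tail_dropLast_subsetPath :
    (subsetPathIndex D : Set (ℕ ⊕ ι)).PairwiseDisjoint
      fun k => (subsetPath D k).tail.dropLast.toFinset := by
  have mem_of_mem_take {j t : ℕ} {a : ι} (ha : a ∈ ((D.toList.rotate j).take t).toFinset) :
      a ∈ D := by
    simpa using List.mem_rotate.1 (List.mem_of_mem_take (List.mem_toFinset.1 ha))
  rintro (j | c) hk (j' | c') hk' hne <;>
    simp only [Function.onFun, disjoint_left, List.mem_toFinset] <;> intro S hS hS'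
  · obtain ⟨t, ht0, ht, rfl⟩ := mem_tail_dropLast_subsetPath_inl hS
    obtain ⟨t', -, ht', hS'⟩ := mem_tail_dropLast_subsetPath_inl hS'
    have htt : t' = t := by
      simpa [card_toFinset_take ((List.nodup_rotate).2 D.nodup_toList), ht.le, ht'.le]
        using congrArg card hS'
    subst htt
    exact hne (congrArg Sum.inl (eq_of_toFinset_take_rotate_eq D.nodup_toList
      (by simpa using inl_mem_subsetPathIndex.1 hk)
      (by simpa using inl_mem_subsetPathIndex.1 hk') ht0 (by simpa using ht) hS'.symm))
  · obtain ⟨t, -, -, rfl⟩ := mem_tail_dropLast_subsetPath_inl hS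
    exact (inr_mem_subsetPathIndex.1 hk').1
      (mem_of_mem_take (mem_tail_dropLast_subsetPath_inr hS').1)
  · obtain ⟨t, -, -, rfl⟩ := mem_tail_dropLast_subsetPath_inl hS'
    exact (inr_mem_subsetPathIndex.1 hk).1
      (mem_of_mem_take (mem_tail_dropLast_subsetPath_inr hS).1)
  · obtain ⟨-, hsub⟩ := mem_tail_dropLast_subsetPath_inr hS
    rcases mem_insert.1 (hsub (mem_tail_dropLast_subsetPath_inr hS').1) with rfl | hc'
    · exact hne rfl
    · exact (inr_mem_subsetPathIndex.1 hk').1 hc'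

end SubsetPaths

theorem exists_disjoint_hammingPaths {ι : Type*} [Fintype ι] {x y : ι → Bool} (hxy : x ≠ y) :
    ∃ (K : Finset (ℕ ⊕ ι)) (P : ℕ ⊕ ι → List (ι → Bool)),
      Fintype.card ι - 1 ≤ #K ∧
      (∀ k ∈ K, IsSelfAvoidingPath (fun a b => hammingDist a b = 1) x y (P k) ∧
        (P k).length ≤ Fintype.card ι + 1) ∧
      (K : Set (ℕ ⊕ ι)).PairwiseDisjoint fun k => (P k).tail.dropLast.toFinset := by
  classical
  set D := diffSet x y
  have hD : D.Nonempty := card_pos.1 (by rw [card_diffSet]; exact hammingDist_pos.2 hxy)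
  refine ⟨subsetPathIndex D, fun k => (subsetPath D k).map (flipSet x),
    card_subsetPathIndex D, fun k hk => ?_, fun k hk k' hk' hne => ?_⟩
  · obtain ⟨hpath, hlen⟩ := isSelfAvoidingPath_subsetPath hD hk
    refine ⟨?_, by simpa using hlen⟩
    simpa [D, flipSet_diffSet] using hpath.map (R' := fun a b => hammingDist a b = 1)
      (flipSet_injective x) fun S T h => (hammingDist_flipSet x S T).trans h
  · have toFinset_map (l : List (Finset ι)) :
        (l.map (flipSet x)).toFinset = l.toFinset.image (flipSet x) := by
      ext
      simp
    simp only [Function.onFun, ← List.map_tail, ← List.map_dropLast, toFinset_map]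
    exact (disjoint_image (flipSet_injective x)).2
      (pairwiseDisjoint_tail_dropLast_subsetPath hk hk' hne)

section UnionBound

variable {σ κ α : Type*} [Fintype σ] [MeasurableSpace α] (μ : Measure α)
  [IsProbabilityMeasure μ] (S : Set α)

lemma measure_pi_forall_mem (T : Finset σ) :
    Measure.pi (fun _ : σ => μ) {H | ∀ z ∈ T, H z ∈ S} = μ S ^ #T := by
  classical
  have hT : {H : σ → α | ∀ z ∈ T, H z ∈ S} =
      Set.univ.pi fun z => if z ∈ T then S else Set.univ := by
    ext H
    simp only [Set.mem_pi, Set.mem_univ, true_implies]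
    exact ⟨fun h z => by split_ifs with hz <;> simp [h z, hz],
      fun h z hz => by simpa [hz] using h z⟩
  rw [hT, Measure.pi_pi]
  simp only [apply_ite, measure_univ]
  rw [prod_ite_mem, univ_inter, prod_const]

lemma measure_pi_forall_exists_mem_le (K : Finset κ) (I : κ → Finset σ)
    (hI : (K : Set κ).PairwiseDisjoint I) :
    Measure.pi (fun _ : σ => μ) {H | ∀ k ∈ K, ∃ z ∈ I k, H z ∈ S} ≤
      (∏ k ∈ K, (#(I k) : ℝ≥0∞)) * μ S ^ #K := by
  classical
  -- a union bound over the ways of choosing one point in each `I k`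
  let chosen (g : ∀ k ∈ K, σ) : Finset σ := K.attach.image fun k => g k.1 k.2
  have hsub : {H : σ → α | ∀ k ∈ K, ∃ z ∈ I k, H z ∈ S} ⊆
      ⋃ g ∈ K.pi I, {H | ∀ z ∈ chosen g, H z ∈ S} := by
    intro H hH
    choose g hgI hgS using hH
    refine Set.mem_biUnion (mem_pi.2 hgI) ?_
    simp only [chosen, mem_image]
    rintro _ ⟨⟨k, hk⟩, -, rfl⟩
    exact hgS k hk
  have hcard : ∀ g ∈ K.pi I, #(chosen g) = #K := fun g hg => by
    rw [card_image_of_injective _ fun k k' hkk' => ?_, card_attach]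
    by_contra hne
    exact disjoint_left.1 (hI k.2 k'.2 (Subtype.coe_ne_coe.2 hne)) (mem_pi.1 hg k.1 k.2)
      (hkk' ▸ mem_pi.1 hg k'.1 k'.2)
  calc _ ≤ ∑ g ∈ K.pi I, Measure.pi (fun _ : σ => μ) {H | ∀ z ∈ chosen g, H z ∈ S} :=
        (measure_mono hsub).trans (measure_biUnion_finset_le _ _)
    _ = ∑ g ∈ K.pi I, μ S ^ #K :=
        sum_congr rfl fun g hg => by rw [measure_pi_forall_mem, hcard g hg]
    _ = _ := by rw [sum_const, card_pi, nsmul_eq_mul, Nat.cast_prod]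

end UnionBound

section GaussianTail

open Real

lemma gaussianReal_Ioi_le (v : ℝ≥0) {t : ℝ} (ht : 0 ≤ t) :
    gaussianReal 0 v (Set.Ioi t) ≤ ENNReal.ofReal (exp (-t ^ 2 / (2 * v))) := by
  have hsub : HasSubgaussianMGF id v (gaussianReal 0 v) :=
    ⟨integrable_exp_mul_gaussianReal, fun s => by simp [mgf_id_gaussianReal]⟩
  calc gaussianReal 0 v (Set.Ioi t) ≤ gaussianReal 0 v {x | t ≤ id x} :=
        measure_mono fun x (hx : t < x) => hx.le
    _ = ENNReal.ofReal ((gaussianReal 0 v).real {x | t ≤ id x}) :=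
        (ofReal_measureReal (measure_ne_top _ _)).symm
    _ ≤ _ := ENNReal.ofReal_le_ofReal (hsub.measure_ge_le ht)

lemma natCast_mul_gaussianReal_Ioi_sqrt_le {N : ℕ} (hN : 0 < N) {c : ℝ} (hc : 0 ≤ 1 + c) :
    (N : ℝ≥0∞) * gaussianReal 0 N (Set.Ioi (√(2 * (1 + c) * N * log N))) ≤
      ENNReal.ofReal ((N : ℝ) ^ (-c)) := by
  have hN' : (0 : ℝ) < N := Nat.cast_pos.2 hN
  have harg : 0 ≤ 2 * (1 + c) * N * log N := by
    have := Real.log_natCast_nonneg N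
    positivity
  calc (N : ℝ≥0∞) * gaussianReal 0 N (Set.Ioi (√(2 * (1 + c) * N * log N)))
      ≤ N * ENNReal.ofReal (exp (-√(2 * (1 + c) * N * log N) ^ 2 / (2 * N))) := by
        gcongr
        simpa using gaussianReal_Ioi_le N (sqrt_nonneg (2 * (1 + c) * N * log N))
    _ = ENNReal.ofReal ((N : ℝ) ^ (-c)) := by
        rw [sq_sqrt harg, ← ENNReal.ofReal_natCast, ← ENNReal.ofReal_mul hN'.le,
          rpow_def_of_pos hN',
          show log N * -c = log N + -(2 * (1 + c) * N * log N) / (2 * N) by field_simp; ring,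
          exp_add, exp_log hN']

end GaussianTail

section LowPaths

variable {ι : Type*} [Fintype ι] [DecidableEq ι]

def HasLowPath (τ : ℝ) (H : (ι → Bool) → ℝ) (x y : ι → Bool) : Prop :=
  ∃ l, IsSelfAvoidingPath (fun a b => hammingDist a b = 1) x y l ∧
    l.length ≤ Fintype.card ι + 1 ∧ ∀ z ∈ l.tail.dropLast, H z ≤ τ

variable (μ : Measure ℝ) [IsProbabilityMeasure μ] (τ : ℝ)

lemma measure_not_hasLowPath_le (hp : Fintype.card ι * μ (Set.Ioi τ) ≤ 1) (x y : ι → Bool) :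
    Measure.pi (fun _ : ι → Bool => μ) {H | ¬ HasLowPath τ H x y} ≤
      (Fintype.card ι * μ (Set.Ioi τ)) ^ (Fintype.card ι - 1) := by
  by_cases hxy : x = y
  · subst hxy
    have hempty : {H | ¬ HasLowPath τ H x x} = ∅ := Set.eq_empty_of_forall_notMem fun H hH =>
      hH ⟨[x], isSelfAvoidingPath_singleton _ x, by simp, by simp⟩
    simp [hempty]
  obtain ⟨K, P, hK, hP, hdisj⟩ := exists_disjoint_hammingPaths hxy
  have hcard : ∀ k ∈ K, (#(P k).tail.dropLast.toFinset : ℝ≥0∞) ≤ Fintype.card ι := by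
    intro k hk
    have := (hP k hk).2
    have := List.toFinset_card_le (P k).tail.dropLast
    simp only [List.length_dropLast, List.length_tail] at this
    exact_mod_cast (by omega)
  calc _ ≤ Measure.pi (fun _ : ι → Bool => μ)
        {H | ∀ k ∈ K, ∃ z ∈ (P k).tail.dropLast.toFinset, H z ∈ Set.Ioi τ} := by
        refine measure_mono fun H hH k hk => ?_
        by_contra! h
        exact hH ⟨P k, (hP k hk).1, (hP k hk).2,
          fun z hz => not_lt.1 (h z (List.mem_toFinset.2 hz))⟩
    _ ≤ (∏ k ∈ K, (#(P k).tail.dropLast.toFinset : ℝ≥0∞)) * μ (Set.Ioi τ) ^ #K :=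
        measure_pi_forall_exists_mem_le μ _ K _ hdisj
    _ ≤ (Fintype.card ι * μ (Set.Ioi τ)) ^ #K := by
        rw [mul_pow]
        gcongr
        exact prod_le_pow_card _ _ _ hcard
    _ ≤ _ := pow_le_pow_right_of_le_one' hp hK

lemma one_sub_le_measure_forall_hasLowPath {r : ℝ} (hr0 : 0 ≤ r) (hr : r ≤ 1)
    (hp : Fintype.card ι * μ (Set.Ioi τ) ≤ ENNReal.ofReal r) :
    1 - ENNReal.ofReal (4 ^ Fintype.card ι * r ^ (Fintype.card ι - 1)) ≤
      Measure.pi (fun _ : ι → Bool => μ) {H | ∀ x y, HasLowPath τ H x y} := by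
  set n := Fintype.card ι
  have hp1 : (n : ℝ≥0∞) * μ (Set.Ioi τ) ≤ 1 := hp.trans (ENNReal.ofReal_le_one.2 hr)
  have hcompl : {H : (ι → Bool) → ℝ | ∀ x y, HasLowPath τ H x y}ᶜ =
      ⋃ x, ⋃ y, {H | ¬ HasLowPath τ H x y} := by
    ext H
    simp
  have hbad : Measure.pi (fun _ : ι → Bool => μ) {H | ∀ x y, HasLowPath τ H x y}ᶜ ≤
      ENNReal.ofReal (4 ^ n * r ^ (n - 1)) := by
    calc _ ≤ ∑ x : ι → Bool, ∑ y : ι → Bool,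
          Measure.pi (fun _ : ι → Bool => μ) {H | ¬ HasLowPath τ H x y} := by
          rw [hcompl]
          exact (measure_iUnion_fintype_le _ _).trans
            (sum_le_sum fun x _ => measure_iUnion_fintype_le _ _)
      _ ≤ ∑ x : ι → Bool, ∑ y : ι → Bool, ENNReal.ofReal r ^ (n - 1) :=
          sum_le_sum fun x _ => sum_le_sum fun y _ =>
            (measure_not_hasLowPath_le μ τ hp1 x y).trans (pow_le_pow_left' hp _)
      _ = _ := by
          rw [ENNReal.ofReal_mul (by positivity), ENNReal.ofReal_pow hr0,
            ENNReal.ofReal_pow (by norm_num), ENNReal.ofReal_ofNat,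
            show (4 : ℝ≥0∞) = 2 * 2 by norm_num, mul_pow]
          simp [n, mul_assoc]
  calc _ ≤ 1 - Measure.pi (fun _ : ι → Bool => μ) {H | ∀ x y, HasLowPath τ H x y}ᶜ :=
        tsub_le_tsub_left hbad 1
    _ ≤ _ := by
      rw [tsub_le_iff_right, ← measure_univ (μ := Measure.pi fun _ : ι → Bool => μ)]
      exact measure_univ_le_add_compl _

end LowPaths

lemma eventually_four_pow_mul_rpow_le {c : ℝ} (hc : 0 < c) :
    ∀ᶠ N : ℕ in atTop,
      (4 : ℝ) ^ N * ((N : ℝ) ^ (-c)) ^ (N - 1) ≤ Real.exp (-c * N) := by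
  filter_upwards [eventually_ge_atTop 2, (Real.tendsto_log_atTop.comp
    tendsto_natCast_atTop_atTop).eventually_ge_atTop (2 * (Real.log 4 + c) / c)] with N hN hlog
  have hN' : (2 : ℝ) ≤ N := by exact_mod_cast hN
  rw [Function.comp_apply, div_le_iff₀ hc] at hlog
  rw [← Real.exp_log (by norm_num : (0 : ℝ) < 4), ← Real.exp_nat_mul,
    Real.rpow_def_of_pos (by linarith), ← Real.exp_nat_mul, ← Real.exp_add, Real.exp_le_exp,
    Nat.cast_sub (by omega), Nat.cast_one]
  -- `N - 1 ≥ N / 2` and `c log N ≥ 2 (log 4 + c)`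
  nlinarith [Real.log_pos (by norm_num : (1 : ℝ) < 4)]

theorem statement13 (c : ℝ) (hc : 0 < c) :
    ∃ N₀ : ℕ, ∀ N : ℕ, N₀ ≤ N →
      ENNReal.ofReal (1 - Real.exp (-c * N)) ≤
        QN N { H : Conf N → ℝ | ∀ x y : Conf N, x ≠ y →
          ∃ l : List (Conf N),
            -- a self-avoiding path from `x` to `y` along single spin flips
            l.head? = some x ∧ l.getLast? = some y ∧ l.Nodup ∧
            (∀ e ∈ l.zip l.tail, hammingDist e.1 e.2 = 1) ∧
            -- of length at most `N`
            l.length ≤ N + 1 ∧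
            -- whose interior points all have energy at most `√(2(1+c) N log N)`
            ∀ z ∈ l.tail.dropLast, H z ≤ Real.sqrt (2 * (1 + c) * N * Real.log N) } := by
  obtain ⟨N₀, hN₀⟩ := eventually_atTop.1 ((eventually_gt_atTop 0).and
    (eventually_four_pow_mul_rpow_le hc))
  refine ⟨N₀, fun N hN => ?_⟩
  obtain ⟨hN0, hsmall⟩ := hN₀ N hN
  have hr1 : (N : ℝ) ^ (-c) ≤ 1 :=
    Real.rpow_le_one_of_one_le_of_nonpos (by exact_mod_cast hN0) (by linarith)
  have hlow := one_sub_le_measure_forall_hasLowPath (ι := Fin N) (gaussianReal 0 N) _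
    (Real.rpow_nonneg (Nat.cast_nonneg N) _) hr1
    (by simpa using natCast_mul_gaussianReal_Ioi_sqrt_le hN0 (by linarith : 0 ≤ 1 + c))
  calc ENNReal.ofReal (1 - Real.exp (-c * N)) = 1 - ENNReal.ofReal (Real.exp (-c * N)) := by
        rw [ENNReal.ofReal_sub _ (Real.exp_pos _).le, ENNReal.ofReal_one]
    _ ≤ 1 - ENNReal.ofReal (4 ^ N * ((N : ℝ) ^ (-c)) ^ (N - 1)) := by gcongr
    _ ≤ _ := by simpa [QN] using hlow
    _ ≤ _ := measure_mono fun H hH x y _ => by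
        obtain ⟨l, ⟨hx, hy, hnd, hchain⟩, hlen, hτ⟩ := hH x y
        exact ⟨l, hx, hy, hnd, forall_mem_zip_tail_iff_isChain.2 hchain,
          by simpa using hlen, hτ⟩

end
end
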